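/- arXiv:1507.02090 — 4 statements merged into one kernel-verified Lean document; each statement's English description precedes it below -/
import Mathlib

section
/- For n \ge 3 and 1 \le s \le n-1, the number of (s-1)-codimensional faces of the (n-2)-dimensional Stasheff associahedron equals the Kirkman-Cayley number D_{n+1,s-1} = (1/s) \binom{n-2}{s-1} \binom{n+s-1}{s-1}, and this equals (n+s-1)!/n! times the coefficient C_{n,s}/(n+s-1)! of z^s t^{n+s-1} in e^{z t^2/(1-t)} - 1, i.e., C_{n,s} = n! \cdot D_{n+1,s-1}, where C_{n,s} is the number of plane rooted trees with n ordered leaves and s internal vertices each having at least two children. -/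
/-- Plane rooted trees: a tree is a leaf or a node with an (ordered) list of subtrees. -/
inductive PTree where
  | leaf : PTree
  | node : List PTree → PTree

namespace PTree

/-- Number of leaves of a plane rooted tree. -/
def numLeaves : PTree → ℕ
  | .leaf => 1
  | .node l => (l.attach.map (fun x => numLeaves x.1)).sum
decreasing_by simp only [PTree.node.sizeOf_spec]; have h := List.sizeOf_lt_of_mem x.2; omega

/-- Number of internal vertices of a plane rooted tree. -/
def numInternal : PTree → ℕ
  | .leaf => 0
  | .node l => 1 + (l.attach.map (fun x => numInternal x.1)).sum
decreasing_by simp only [PTree.node.sizeOf_spec]; have h := List.sizeOf_lt_of_mem x.2; omega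

/-- Every internal vertex has at least two children. -/
def valid : PTree → Prop
  | .leaf => True
  | .node l => 2 ≤ l.length ∧ ∀ x ∈ l.attach, valid x.1
decreasing_by simp only [PTree.node.sizeOf_spec]; have h := List.sizeOf_lt_of_mem x.2; omega

end PTree

/-!
Encode a tree by its Łukasiewicz word, the arities of its vertices in preorder. This is a
bijection from the trees with `n` leaves and `s` internal vertices, all of arity at least two,
onto the words of length `n + s` with `n` zeros, no letter `1`, sum `n + s - 1`, and in which
every proper prefix has a nonnegative sum of `a - 1` over its letters `a`.

Drop the prefix condition. By the cycle lemma exactly one of the `n + s` rotations of such a word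
satisfies it, so `(n + s)` times the number of trees counts all these words: choose the `s`
positions of the nonzero letters, then subtract `2` from each of them to get a composition of
`n - s - 1` into `s` parts. Hence `(n + s) · #trees = C(n+s, s) · C(n-2, s-1)`, and
`(n + s) C(n+s-1, s-1) = s C(n+s, s)` turns this into the Kirkman–Cayley number. The count with
labelled leaves is `n!` times as large.
-/

namespace PTree

/-- The Łukasiewicz word: the arities of the vertices in preorder. -/
def arityWord : PTree → List ℕ
  | .leaf => [0]
  | .node l => l.length :: (l.attach.map (fun x => arityWord x.1)).flatten
decreasing_by simp only [PTree.node.sizeOf_spec]; have h := List.sizeOf_lt_of_mem x.2; omega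

@[simp] lemma numLeaves_leaf : numLeaves .leaf = 1 := by rw [numLeaves]

@[simp] lemma numLeaves_node (l : List PTree) : numLeaves (.node l) = (l.map numLeaves).sum := by
  rw [numLeaves]; congr 1; simp

@[simp] lemma numInternal_leaf : numInternal .leaf = 0 := by rw [numInternal]

@[simp] lemma numInternal_node (l : List PTree) :
    numInternal (.node l) = 1 + (l.map numInternal).sum := by
  rw [numInternal]; congr 2; simp

@[simp] lemma valid_leaf : valid .leaf := by rw [valid]; trivial

@[simp] lemma valid_node (l : List PTree) :
    valid (.node l) ↔ 2 ≤ l.length ∧ ∀ T ∈ l, valid T := by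
  rw [valid]; simp

@[simp] lemma arityWord_leaf : arityWord .leaf = [0] := by rw [arityWord]

@[simp] lemma arityWord_node (l : List PTree) :
    arityWord (.node l) = l.length :: (l.map arityWord).flatten := by
  rw [arityWord]; congr 2; simp

def forestWord (l : List PTree) : List ℕ := (l.map arityWord).flatten

@[simp] lemma forestWord_nil : forestWord [] = [] := rfl

@[simp] lemma forestWord_singleton (T : PTree) : forestWord [T] = arityWord T := by
  simp [forestWord]

@[simp] lemma forestWord_leaf_cons (l : List PTree) :
    forestWord (.leaf :: l) = 0 :: forestWord l := by
  simp [forestWord]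

@[simp] lemma forestWord_node_cons (ts l : List PTree) :
    forestWord (.node ts :: l) = ts.length :: forestWord (ts ++ l) := by
  simp [forestWord]

end PTree

/-- The prefix condition for the word of a forest of `k` trees: after reading any proper prefix,
some subtree is still unfinished. -/
def Dominated (k : ℕ) (w : List ℕ) : Prop := ∀ i < w.length, i < (w.take i).sum + k

def IsForestWord (k : ℕ) (w : List ℕ) : Prop :=
  1 ∉ w ∧ w.sum + k = w.length ∧ Dominated k w

@[simp] lemma isForestWord_nil_iff {k : ℕ} : IsForestWord k [] ↔ k = 0 := by
  simp [IsForestWord, Dominated]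

lemma not_isForestWord_zero_cons {a : ℕ} {w : List ℕ} : ¬ IsForestWord 0 (a :: w) :=
  fun h => by simpa using h.2.2 0 (by simp)

lemma isForestWord_succ_cons {k a : ℕ} {w : List ℕ} :
    IsForestWord (k + 1) (a :: w) ↔ a ≠ 1 ∧ IsForestWord (k + a) w := by
  simp only [IsForestWord, Dominated, List.mem_cons, List.sum_cons, List.length_cons, not_or]
  constructor
  · rintro ⟨⟨ha, hw⟩, hsum, hdom⟩
    refine ⟨Ne.symm ha, hw, by omega, fun i hi => ?_⟩
    have := hdom (i + 1) (by omega)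
    simp only [List.take_succ_cons, List.sum_cons] at this
    omega
  · rintro ⟨ha, hw, hsum, hdom⟩
    refine ⟨⟨Ne.symm ha, hw⟩, by omega, fun i hi => ?_⟩
    cases i with
    | zero => simp
    | succ i =>
      have := hdom i (by omega)
      simp only [List.take_succ_cons, List.sum_cons]
      omega

namespace PTree

lemma isForestWord_forestWord (l : List PTree) (hl : ∀ T ∈ l, T.valid) :
    IsForestWord l.length (forestWord l) := by
  match l with
  | [] => simp
  | .leaf :: l =>
    rw [forestWord_leaf_cons, List.length_cons, isForestWord_succ_cons]
    exact ⟨zero_ne_one, isForestWord_forestWord l (List.forall_mem_cons.1 hl).2⟩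
  | .node ts :: l =>
    obtain ⟨hts, hl⟩ := List.forall_mem_cons.1 hl
    rw [valid_node] at hts
    rw [forestWord_node_cons, List.length_cons, isForestWord_succ_cons]
    refine ⟨by omega, ?_⟩
    have := isForestWord_forestWord (ts ++ l) (List.forall_mem_append.2 ⟨hts.2, hl⟩)
    rwa [List.length_append, add_comm] at this
termination_by (forestWord l).length
decreasing_by all_goals simp

lemma eq_of_forestWord_eq {l₁ l₂ : List PTree} (h₁ : ∀ T ∈ l₁, T.valid)
    (h₂ : ∀ T ∈ l₂, T.valid) (h : forestWord l₁ = forestWord l₂) : l₁ = l₂ := by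
  match l₁, l₂ with
  | [], [] => rfl
  | [], .leaf :: _ | .leaf :: _, [] => simp at h
  | [], .node _ :: _ | .node _ :: _, [] => simp at h
  | .leaf :: l₁, .leaf :: l₂ =>
    simp only [forestWord_leaf_cons, List.cons.injEq, true_and] at h
    rw [eq_of_forestWord_eq (List.forall_mem_cons.1 h₁).2 (List.forall_mem_cons.1 h₂).2 h]
  | .leaf :: _, .node ts :: _ =>
    have := (valid_node ts).1 (List.forall_mem_cons.1 h₂).1
    simp only [forestWord_leaf_cons, forestWord_node_cons, List.cons.injEq] at h
    omega
  | .node ts :: _, .leaf :: _ =>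
    have := (valid_node ts).1 (List.forall_mem_cons.1 h₁).1
    simp only [forestWord_leaf_cons, forestWord_node_cons, List.cons.injEq] at h
    omega
  | .node ts₁ :: l₁, .node ts₂ :: l₂ =>
    obtain ⟨hts₁, hl₁⟩ := List.forall_mem_cons.1 h₁
    obtain ⟨hts₂, hl₂⟩ := List.forall_mem_cons.1 h₂
    rw [valid_node] at hts₁ hts₂
    simp only [forestWord_node_cons, List.cons.injEq] at h
    have happ := eq_of_forestWord_eq (List.forall_mem_append.2 ⟨hts₁.2, hl₁⟩)
      (List.forall_mem_append.2 ⟨hts₂.2, hl₂⟩) h.2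
    obtain ⟨rfl, rfl⟩ := List.append_inj happ h.1
    rfl
termination_by (forestWord l₁).length
decreasing_by all_goals simp

lemma exists_forestWord_eq {k : ℕ} {w : List ℕ} (hw : IsForestWord k w) :
    ∃ l : List PTree, (∀ T ∈ l, T.valid) ∧ l.length = k ∧ forestWord l = w := by
  induction w generalizing k with
  | nil => exact ⟨[], by simp, by simpa [eq_comm] using hw, rfl⟩
  | cons a w ih =>
    obtain _ | k := k
    · exact absurd hw not_isForestWord_zero_cons
    obtain ⟨ha, hw⟩ := isForestWord_succ_cons.1 hw
    obtain ⟨l, hl, hlen, rfl⟩ := ih hw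
    obtain rfl | ha := Nat.eq_zero_or_pos a
    · exact ⟨.leaf :: l, by simpa using hl, by simpa using hlen, forestWord_leaf_cons l⟩
    refine ⟨.node (l.take a) :: l.drop a, ?_, by simp; omega, ?_⟩
    · simp only [List.mem_cons, forall_eq_or_imp, valid_node, List.length_take]
      exact ⟨⟨by omega, fun T hT => hl T (List.mem_of_mem_take hT)⟩,
        fun T hT => hl T (List.mem_of_mem_drop hT)⟩
    · rw [forestWord_node_cons, List.take_append_drop, List.length_take]
      congr; omega

lemma count_zero_forestWord (l : List PTree) (hl : ∀ T ∈ l, T.valid) :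
    (forestWord l).count 0 = (l.map numLeaves).sum := by
  match l with
  | [] => simp
  | .leaf :: l => simp [count_zero_forestWord l (List.forall_mem_cons.1 hl).2, add_comm]
  | .node ts :: l =>
    obtain ⟨hts, hl⟩ := List.forall_mem_cons.1 hl
    rw [valid_node] at hts
    rw [forestWord_node_cons, List.count_cons_of_ne (by omega),
      count_zero_forestWord (ts ++ l) (List.forall_mem_append.2 ⟨hts.2, hl⟩)]
    simp
termination_by (forestWord l).length
decreasing_by all_goals simp

lemma length_forestWord (l : List PTree) :
    (forestWord l).length = (l.map numLeaves).sum + (l.map numInternal).sum := by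
  match l with
  | [] => simp
  | .leaf :: l => simp [length_forestWord l]; omega
  | .node ts :: l => simp [length_forestWord (ts ++ l)]; omega
termination_by (forestWord l).length
decreasing_by all_goals simp

end PTree

/-- Words as for a single tree, but without the prefix condition, which makes the set closed
under rotation. -/
def BalancedWords (n s : ℕ) : Set (List ℕ) :=
  {w | 1 ∉ w ∧ w.count 0 = n ∧ w.length = n + s ∧ w.sum + 1 = w.length}

lemma rotate_mem_balancedWords {n s : ℕ} {w : List ℕ} (hw : w ∈ BalancedWords n s) (r : ℕ) :
    w.rotate r ∈ BalancedWords n s := by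
  have hp := List.rotate_perm w r
  obtain ⟨h1, hcount, hlen, hsum⟩ := hw
  exact ⟨fun h => h1 (hp.mem_iff.1 h), by rwa [hp.count_eq], by rwa [hp.length_eq],
    by rwa [hp.sum_eq, hp.length_eq]⟩

namespace PTree

lemma arityWord_mem_balancedWords {T : PTree} (hT : T.valid) :
    arityWord T ∈ BalancedWords T.numLeaves T.numInternal ∧ Dominated 1 (arityWord T) := by
  have hw := isForestWord_forestWord [T] (by simpa using hT)
  have hcount := count_zero_forestWord [T] (by simpa using hT)
  have hlen := length_forestWord [T]
  simp only [forestWord_singleton, List.length_singleton, List.map_cons, List.map_nil,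
    List.sum_singleton] at hw hcount hlen
  exact ⟨⟨hw.1, hcount, hlen, hw.2.1⟩, hw.2.2⟩

lemma natCard_eq_natCard_dominated (n s : ℕ) :
    Nat.card {T : PTree // T.valid ∧ T.numLeaves = n ∧ T.numInternal = s} =
      Nat.card {w // w ∈ BalancedWords n s ∧ Dominated 1 w} := by
  refine Nat.card_eq_of_bijective (fun T => ⟨arityWord T.1, by
    obtain ⟨T, hT, rfl, rfl⟩ := T
    exact arityWord_mem_balancedWords hT⟩) ⟨?_, ?_⟩
  · rintro ⟨T₁, h₁, _⟩ ⟨T₂, h₂, _⟩ h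
    have : [T₁] = [T₂] :=
      eq_of_forestWord_eq (by simpa using h₁) (by simpa using h₂) (by simpa using h)
    simpa using this
  · rintro ⟨w, ⟨h1, hcount, hlen, hsum⟩, hdom⟩
    obtain ⟨l, hl, hlen1, rfl⟩ := exists_forestWord_eq ⟨h1, hsum, hdom⟩
    obtain ⟨T, rfl⟩ := List.length_eq_one_iff.1 hlen1
    have hT : T.valid := hl T (by simp)
    obtain ⟨-, hcount', hlen', -⟩ := (arityWord_mem_balancedWords hT).1
    simp only [forestWord_singleton] at hcount hlen
    exact ⟨⟨T, hT, by omega, by omega⟩, Subtype.ext (forestWord_singleton T).symm⟩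

end PTree

section CycleLemma

variable {w : List ℕ}

/-- The lattice path of the doubled word `w ++ w`, with steps `a - 1`. -/
def pathHeight (w : List ℕ) (j : ℕ) : ℤ := ((w ++ w).take j).sum - j

lemma sum_take_append_self_add {r i : ℕ} (hr : r ≤ w.length) (hi : i ≤ w.length) :
    ((w ++ w).take (r + i)).sum = ((w ++ w).take r).sum + ((w.rotate r).take i).sum := by
  have hdrop : (w ++ w).drop r = w.rotate r ++ w.drop r := by
    rw [List.drop_append_of_le_length hr, List.rotate_eq_drop_append_take hr, List.append_assoc,
      List.take_append_drop]
  rw [List.take_add, List.sum_append, hdrop,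
    List.take_append_of_le_length (l₁ := w.rotate r) (by rwa [List.length_rotate])]

lemma dominated_rotate_iff {r : ℕ} (hr : r ≤ w.length) :
    Dominated 1 (w.rotate r) ↔ ∀ i < w.length, pathHeight w r ≤ pathHeight w (r + i) := by
  rw [Dominated, List.length_rotate]
  refine forall₂_congr fun i hi => ?_
  have := sum_take_append_self_add hr hi.le
  simp only [pathHeight]
  omega

lemma pathHeight_add_length (hw : w.sum + 1 = w.length) {j : ℕ} (hj : j ≤ w.length) :
    pathHeight w (j + w.length) = pathHeight w j - 1 := by
  have := sum_take_append_self_add (w := w) hj le_rfl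
  rw [List.take_of_length_le (l := w.rotate j) (by simp), (List.rotate_perm w j).sum_eq] at this
  simp only [pathHeight]
  omega

lemma eq_of_dominated_rotate (hw : w.sum + 1 = w.length) {a b : ℕ} (ha : a < w.length)
    (hb : b < w.length) (hda : Dominated 1 (w.rotate a)) (hdb : Dominated 1 (w.rotate b)) :
    a = b := by
  by_contra hne
  wlog hab : a < b generalizing a b
  · exact this hb ha hdb hda (Ne.symm hne) (by omega)
  -- the path would satisfy `h a ≤ h b ≤ h (a + w.length) = h a - 1`
  rw [dominated_rotate_iff ha.le] at hda
  rw [dominated_rotate_iff hb.le] at hdb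
  have h₁ := hda (b - a) (by omega)
  have h₂ := hdb (a + w.length - b) (by omega)
  rw [Nat.add_sub_cancel' hab.le] at h₁
  rw [Nat.add_sub_cancel' (by omega), pathHeight_add_length hw ha.le] at h₂
  omega

lemma exists_dominated_rotate (hw : w.sum + 1 = w.length) :
    ∃ r < w.length, Dominated 1 (w.rotate r) := by
  obtain ⟨m, hm, hmin⟩ := (Finset.range w.length).exists_min_image (pathHeight w)
    ⟨0, by simp; omega⟩
  have hex : ∃ r, r < w.length ∧ ∀ i < w.length, pathHeight w r ≤ pathHeight w i :=
    ⟨m, by simpa using hm, fun i hi => hmin i (by simpa using hi)⟩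
  -- the first minimum of the path: positions before it lie strictly higher, which is what is
  -- needed once the rotation wraps around
  obtain ⟨hr, hrmin⟩ := Nat.find_spec hex
  refine ⟨Nat.find hex, hr, (dominated_rotate_iff hr.le).2 fun i hi => ?_⟩
  by_cases hwrap : Nat.find hex + i < w.length
  · exact hrmin _ hwrap
  set j := Nat.find hex + i - w.length
  have hj : ¬ (j < w.length ∧ ∀ i < w.length, pathHeight w j ≤ pathHeight w i) :=
    Nat.find_min hex (by omega)
  push Not at hj
  obtain ⟨i', hi', hlt⟩ := hj (by omega)
  have := hrmin i' hi'
  rw [show Nat.find hex + i = j + w.length by omega, pathHeight_add_length hw (by omega)]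
  omega

lemma natCard_eq_natCard_dominated_mul {S : Set (List ℕ)} {m : ℕ}
    (hrot : ∀ w ∈ S, ∀ r, w.rotate r ∈ S) (hlen : ∀ w ∈ S, w.length = m)
    (hsum : ∀ w ∈ S, w.sum + 1 = w.length) :
    Nat.card S = Nat.card {w // w ∈ S ∧ Dominated 1 w} * m := by
  choose ρ hρ using fun w : S => exists_dominated_rotate (hsum w w.2)
  rw [← Nat.card_fin m, ← Nat.card_prod]
  refine Nat.card_eq_of_bijective (fun w => (⟨w.1.rotate (ρ w), hrot _ w.2 _, (hρ w).2⟩,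
    ⟨ρ w, hlen w w.2 ▸ (hρ w).1⟩)) ⟨fun w w' h => ?_, ?_⟩
  · simp only [Prod.mk.injEq, Subtype.mk.injEq, Fin.mk.injEq] at h
    rw [h.2] at h
    exact Subtype.ext (List.rotate_injective _ h.1)
  · rintro ⟨⟨d, hdS, hdd⟩, r, hr⟩
    have hback : (d.rotate (m - r)).rotate r = d := by
      rw [List.rotate_rotate, Nat.sub_add_cancel hr.le, ← hlen d hdS, List.rotate_length]
    let w : S := ⟨d.rotate (m - r), hrot d hdS _⟩
    have hρw : ρ w = r := eq_of_dominated_rotate (hsum w w.2) (hρ w).1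
      (by rw [List.length_rotate, hlen d hdS]; exact hr) (hρ w).2 (by rwa [hback])
    refine ⟨w, Prod.ext (Subtype.ext ?_) (Fin.ext hρw)⟩
    simp only [hρw]
    exact hback

end CycleLemma

section Counting

open Finset

lemma natCard_eq_natCard_ofFn_mem {α : Type*} {S : Set (List α)} {m : ℕ}
    (hS : ∀ w ∈ S, w.length = m) :
    Nat.card S = Nat.card {g : Fin m → α // List.ofFn g ∈ S} := by
  refine (Nat.card_eq_of_bijective (fun g => ⟨List.ofFn g.1, g.2⟩)
    ⟨fun g g' h => Subtype.ext (List.ofFn_injective (congrArg Subtype.val h)), ?_⟩).symm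
  rintro ⟨w, hw⟩
  obtain rfl := hS w hw
  exact ⟨⟨w.get, by rwa [List.ofFn_get]⟩, Subtype.ext (List.ofFn_get w)⟩

lemma count_ofFn {α : Type*} [DecidableEq α] {m : ℕ} (g : Fin m → α) (a : α) :
    (List.ofFn g).count a = (univ.filter (g · = a)).card := by
  rw [← Multiset.coe_count, ← Fin.univ_val_map, Multiset.count_map]
  simp [Finset.card, Finset.filter_val, eq_comm]

variable {ι : Type*}

lemma sum_eq_sum_coe_of_eq_zero [Fintype ι] {A : Finset ι} {g : ι → ℕ}
    (hg : ∀ i ∉ A, g i = 0) : ∑ i, g i = ∑ a : A, g a := by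
  rw [sum_coe_sort]
  exact (sum_subset (subset_univ A) fun i _ hi => hg i hi).symm

def extendAddTwo [DecidableEq ι] (A : Finset ι) (f : A → ℕ) (i : ι) : ℕ :=
  if h : i ∈ A then f ⟨i, h⟩ + 2 else 0

lemma extendAddTwo_ne_one [DecidableEq ι] (A : Finset ι) (f : A → ℕ) (i : ι) :
    extendAddTwo A f i ≠ 1 := by
  unfold extendAddTwo; split_ifs <;> omega

lemma filter_extendAddTwo_ne_zero [Fintype ι] [DecidableEq ι] (A : Finset ι) (f : A → ℕ) :
    univ.filter (extendAddTwo A f · ≠ 0) = A := by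
  ext i; by_cases h : i ∈ A <;> simp [extendAddTwo, h]

lemma sum_extendAddTwo [Fintype ι] [DecidableEq ι] (A : Finset ι) (f : A → ℕ) :
    ∑ i, extendAddTwo A f i = ∑ a, f a + 2 * A.card := by
  rw [sum_eq_sum_coe_of_eq_zero (A := A) fun i hi => by simp [extendAddTwo, hi]]
  simp [extendAddTwo, sum_add_distrib, mul_comm]

lemma natCard_ne_one_eq_natCard_sigma [Fintype ι] [DecidableEq ι] (s K : ℕ) :
    Nat.card {g : ι → ℕ // (∀ i, g i ≠ 1) ∧ (univ.filter (g · ≠ 0)).card = s ∧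
      ∑ i, g i = K + 2 * s} =
      Nat.card (Σ A : {A : Finset ι // A.card = s}, {f : A.1 → ℕ // ∑ a, f a = K}) := by
  refine (Nat.card_eq_of_bijective (fun Af => ⟨extendAddTwo Af.1.1 Af.2.1,
    extendAddTwo_ne_one _ _, by rw [filter_extendAddTwo_ne_zero, Af.1.2],
    by rw [sum_extendAddTwo, Af.2.2, Af.1.2]⟩) ⟨?_, ?_⟩).symm
  · rintro ⟨⟨A, hA⟩, f, hf⟩ ⟨⟨A', hA'⟩, f', hf'⟩ h
    have hg : extendAddTwo A f = extendAddTwo A' f' := congrArg Subtype.val h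
    obtain rfl : A = A' := by
      rw [← filter_extendAddTwo_ne_zero A f, hg, filter_extendAddTwo_ne_zero]
    obtain rfl : f = f' := funext fun a => by simpa [extendAddTwo] using congrFun hg a
    rfl
  · rintro ⟨g, hg1, hcard, hsum⟩
    set A := univ.filter (g · ≠ 0)
    have hg0 : ∀ i ∉ A, g i = 0 := by simp [A]
    have hg2 (a : A) : 2 ≤ g a := by
      have := (mem_filter.1 a.2).2; have := hg1 a; omega
    have hsumA : ∑ a : A, g a = ∑ a : A, (g a - 2) + 2 * s := calc
      _ = ∑ a : A, (g a - 2 + 2) := sum_congr rfl fun a _ => by have := hg2 a; omega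
      _ = _ := by simp [sum_add_distrib, hcard, mul_comm]
    refine ⟨⟨⟨A, hcard⟩, fun a => g a - 2, ?_⟩, Subtype.ext (funext fun i => ?_)⟩
    · show ∑ a : A, (g a - 2) = K
      rw [sum_eq_sum_coe_of_eq_zero hg0] at hsum
      omega
    · by_cases hi : i ∈ A
      · have : 2 ≤ g i := hg2 ⟨i, hi⟩
        simp only [extendAddTwo, hi, dite_true]
        omega
      · simp [extendAddTwo, hi, hg0 i hi]

/-- Choose the support, then subtract `2` on it to get a composition of `K` (stars and bars). -/
lemma natCard_ne_one_support_sum [Fintype ι] [DecidableEq ι] (s K : ℕ) :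
    Nat.card {g : ι → ℕ // (∀ i, g i ≠ 1) ∧ (univ.filter (g · ≠ 0)).card = s ∧
      ∑ i, g i = K + 2 * s} = (Fintype.card ι).choose s * s.multichoose K := by
  have hfiber (A : {A : Finset ι // A.card = s}) :
      Nat.card {f : A.1 → ℕ // ∑ a, f a = K} = s.multichoose K := by
    rw [← Nat.card_congr (Sym.equivNatSumOfFintype A.1 K), Sym.natCard_sym_eq_multichoose]
    simp [A.2]
  have : ∀ A : Finset ι, Finite {f : A → ℕ // ∑ a, f a = K} :=
    fun A => Finite.of_equiv _ (Sym.equivNatSumOfFintype A K)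
  rw [natCard_ne_one_eq_natCard_sigma, Nat.card_sigma, sum_congr rfl fun A _ => hfiber A,
    sum_const, card_univ, Fintype.card_finset_len, smul_eq_mul]

lemma ofFn_mem_balancedWords_iff {n s : ℕ} (hsn : s < n) (g : Fin (n + s) → ℕ) :
    List.ofFn g ∈ BalancedWords n s ↔
      (∀ i, g i ≠ 1) ∧ (univ.filter (g · ≠ 0)).card = s ∧ ∑ i, g i = (n - s - 1) + 2 * s := by
  have hcard : (univ.filter (g · = 0)).card + (univ.filter (g · ≠ 0)).card = n + s := by
    simpa using card_filter_add_card_filter_not (s := univ) (g · = 0)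
  simp only [BalancedWords, Set.mem_ofPred_eq, List.mem_ofFn, not_exists, count_ofFn,
    List.length_ofFn, List.sum_ofFn, true_and]
  refine and_congr Iff.rfl (and_congr ⟨?_, ?_⟩ ⟨?_, ?_⟩) <;>
    intro h <;> omega

lemma natCard_balancedWords {n s : ℕ} (hs : 1 ≤ s) (hsn : s < n) :
    Nat.card (BalancedWords n s) = (n + s).choose s * (n - 2).choose (s - 1) := by
  rw [natCard_eq_natCard_ofFn_mem fun w hw => hw.2.2.1,
    Nat.card_congr (Equiv.subtypeEquivRight (ofFn_mem_balancedWords_iff hsn)),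
    natCard_ne_one_support_sum, Fintype.card_fin, Nat.multichoose_eq,
    Nat.choose_symm_of_eq_add (show s + (n - s - 1) - 1 = (n - s - 1) + (s - 1) by omega),
    show s + (n - s - 1) - 1 = n - 2 by omega]

end Counting

lemma PTree.natCard_mul_eq_choose_mul_choose {n s : ℕ} (hs : 1 ≤ s) (hsn : s < n) :
    Nat.card {T : PTree // T.valid ∧ T.numLeaves = n ∧ T.numInternal = s} * s =
      (n - 2).choose (s - 1) * (n + s - 1).choose (s - 1) := by
  set c := Nat.card {T : PTree // T.valid ∧ T.numLeaves = n ∧ T.numInternal = s} with hc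
  have hcycle : c * (n + s) = (n + s).choose s * (n - 2).choose (s - 1) := by
    rw [hc, natCard_eq_natCard_dominated, ← natCard_balancedWords hs hsn,
      natCard_eq_natCard_dominated_mul (fun w hw => rotate_mem_balancedWords hw)
        (fun w hw => hw.2.2.1) (fun w hw => hw.2.2.2)]
  have hchoose : (n + s) * (n + s - 1).choose (s - 1) = (n + s).choose s * s := by
    have := Nat.add_one_mul_choose_eq (n + s - 1) (s - 1)
    rwa [Nat.sub_add_cancel (by omega), Nat.sub_add_cancel hs] at this
  refine Nat.eq_of_mul_eq_mul_left (show 0 < n + s by omega) ?_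
  calc (n + s) * (c * s) = c * (n + s) * s := by ring
    _ = (n - 2).choose (s - 1) * ((n + s) * (n + s - 1).choose (s - 1)) := by
      rw [hcycle, hchoose]; ring
    _ = (n + s) * ((n - 2).choose (s - 1) * (n + s - 1).choose (s - 1)) := by ring

theorem stmt_2_general (n s : ℕ) (hs1 : 1 ≤ s) (hs2 : s ≤ n - 1) :
    (Nat.card {T : PTree // T.valid ∧ T.numLeaves = n ∧ T.numInternal = s} : ℚ) =
      (1 / s) * (n - 2).choose (s - 1) * (n + s - 1).choose (s - 1) ∧
    (Nat.card (Equiv.Perm (Fin n) ×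
        {T : PTree // T.valid ∧ T.numLeaves = n ∧ T.numInternal = s}) : ℚ) =
      n.factorial * ((1 / s) * (n - 2).choose (s - 1) * (n + s - 1).choose (s - 1)) := by
  have hcount : (Nat.card {T : PTree // T.valid ∧ T.numLeaves = n ∧ T.numInternal = s} : ℚ) =
      (1 / s) * (n - 2).choose (s - 1) * (n + s - 1).choose (s - 1) := by
    have := PTree.natCard_mul_eq_choose_mul_choose hs1 (by omega : s < n)
    have hs : (s : ℚ) ≠ 0 := by positivity
    field_simp
    exact_mod_cast this
  refine ⟨hcount, ?_⟩
  rw [Nat.card_prod, Nat.cast_mul, hcount, Nat.card_perm, Nat.card_fin]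

/-- For n ≥ 3 and 1 ≤ s ≤ n-1, the number of (s-1)-codimensional faces of
the (n-2)-dimensional Stasheff associahedron (= plane rooted trees with leaves
1,...,n in this order and s internal vertices, each with at least two children) equals
the Kirkman-Cayley number D_{n+1,s-1} = (1/s) C(n-2,s-1) C(n+s-1,s-1); moreover the
number C_{n,s} of plane rooted trees with n ordered leaves (over all n! leaf orderings)
and s internal vertices equals n! · D_{n+1,s-1}. -/
theorem stmt_2 (n s : ℕ) (hn : 3 ≤ n) (hs1 : 1 ≤ s) (hs2 : s ≤ n - 1) :
    (Nat.card {T : PTree // T.valid ∧ T.numLeaves = n ∧ T.numInternal = s} : ℚ) =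
      (1 / s) * (n - 2).choose (s - 1) * (n + s - 1).choose (s - 1) ∧
    (Nat.card (Equiv.Perm (Fin n) ×
        {T : PTree // T.valid ∧ T.numLeaves = n ∧ T.numInternal = s}) : ℚ) =
      n.factorial * ((1 / s) * (n - 2).choose (s - 1) * (n + s - 1).choose (s - 1)) :=
  stmt_2_general n s hs1 hs2
end

section
/- The formal power series identity \frac{1}{1 - wG(t,w)} where wG(t,w) = w\widetilde{\Gamma}_{G(2,1)}(t,w) has expansion beginning 1 + 2wt + (2w^2+w)4t^2 + (5w^3+5w^2+w)8t^3 + (14w^4+21w^3+9w^2+w)16t^4 + \cdots, given that wG(t,w) = 2wt + (w^2+w)4t^2 + (2w^3+3w^2+w)8t^3 + (5w^4+10w^3+6w^2+w)16t^4 + \cdots; in particular the coefficients of w^s (2t)^n in 1/(1-wG) are the entries of the f-vectors of the Stasheff associahedra: the coefficient of w^s(2t)^n equals the number of (s-1)-codimensional faces of the (n-1)-dimensional associahedron. -/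
open Finset

theorem PowerSeries.coeff_eq_of_mul_one_sub_eq_one {R : Type*} [CommRing R]
    {A B : PowerSeries R} (hB : B * (1 - A) = 1) (n : ℕ) :
    PowerSeries.coeff n B = PowerSeries.coeff n (1 : PowerSeries R) +
      ∑ i ∈ range (n + 1), PowerSeries.coeff i B * PowerSeries.coeff (n - i) A := by
  have hB' : B = 1 + B * A := by linear_combination hB
  conv_lhs => rw [hB']
  rw [map_add, PowerSeries.coeff_mul, Nat.sum_antidiagonal_eq_sum_range_succ_mk]

open Polynomial in
/-- given that `A = w·Γ̃_{G(2,1)}(t,w)` has expansion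
`2wt + (w²+w)4t² + (2w³+3w²+w)8t³ + (5w⁴+10w³+6w²+w)16t⁴ + ⋯`, the series
`B = 1/(1-A)` has expansion
`1 + 2wt + (2w²+w)4t² + (5w³+5w²+w)8t³ + (14w⁴+21w³+9w²+w)16t⁴ + ⋯`; in particular
`s` times the coefficient of `w^s (2t)^n` in `B` equals the Kirkman–Cayley number
numerator `C(n-1,s-1)·C(n+s,s-1)`, counting the `(s-1)`-codimensional faces of the
`(n-1)`-dimensional Stasheff associahedron. -/
theorem stmt_11 (A B : PowerSeries (Polynomial ℚ))
    (h0 : PowerSeries.coeff 0 A = 0)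
    (h1 : PowerSeries.coeff 1 A = 2 * X)
    (h2 : PowerSeries.coeff 2 A = 4 * (X ^ 2 + X))
    (h3 : PowerSeries.coeff 3 A = 8 * (2 * X ^ 3 + 3 * X ^ 2 + X))
    (h4 : PowerSeries.coeff 4 A = 16 * (5 * X ^ 4 + 10 * X ^ 3 + 6 * X ^ 2 + X))
    (hB : B * (1 - A) = 1) :
    PowerSeries.coeff 0 B = 1 ∧
    PowerSeries.coeff 1 B = 2 * X ∧
    PowerSeries.coeff 2 B = 4 * (2 * X ^ 2 + X) ∧
    PowerSeries.coeff 3 B = 8 * (5 * X ^ 3 + 5 * X ^ 2 + X) ∧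
    PowerSeries.coeff 4 B = 16 * (14 * X ^ 4 + 21 * X ^ 3 + 9 * X ^ 2 + X) ∧
    (∀ n s : ℕ, 1 ≤ n → n ≤ 4 → 1 ≤ s → s ≤ n →
      (s : ℚ) * (PowerSeries.coeff n B).coeff s =
        2 ^ n * (n - 1).choose (s - 1) * (n + s).choose (s - 1)) := by
  have hrec := PowerSeries.coeff_eq_of_mul_one_sub_eq_one hB
  have b0 : PowerSeries.coeff 0 B = 1 := by
    simpa [h0] using hrec 0
  have b1 : PowerSeries.coeff 1 B = 2 * X := by
    simpa [sum_range_succ, h0, h1, b0] using hrec 1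
  have b2 : PowerSeries.coeff 2 B = 4 * (2 * X ^ 2 + X) := by
    rw [hrec 2]; simp [sum_range_succ, h0, h1, h2, b0, b1]; ring
  have b3 : PowerSeries.coeff 3 B = 8 * (5 * X ^ 3 + 5 * X ^ 2 + X) := by
    rw [hrec 3]; simp [sum_range_succ, h0, h1, h2, h3, b0, b1, b2]; ring
  have b4 : PowerSeries.coeff 4 B = 16 * (14 * X ^ 4 + 21 * X ^ 3 + 9 * X ^ 2 + X) := by
    rw [hrec 4]; simp [sum_range_succ, h0, h1, h2, h3, h4, b0, b1, b2, b3]; ring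
  refine ⟨b0, b1, b2, b3, b4, fun n s hn1 hn4 hs1 hsn => ?_⟩
  interval_cases n <;> interval_cases s <;>
    simp [b1, b2, b3, b4, mul_add, coeff_X, coeff_X_pow, coeff_ofNat_mul] <;>
    norm_num [Nat.choose]
end

section
/- The product formula e^t \prod_{i\ge 3} e^{zq[i-2]_q t^i/i!}, when the coefficient of z^s t^{m}/m! is extracted, equals \sum q^{e_1 + ... + e_s} summed over all partitions of {1,...,m} into blocks where exactly s blocks have size \ge 3 and carry an exponent e_j with 1 \le e_j \le (\text{block size}) - 2, at most one additional block (of size \ge 2, containing m) has exponent 0, and all remaining elements are singletons. -/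
/-!
Write `F(n, s) = n! [tⁿ] eᵗ Mˢ / s!` with `M = ∑_{i ≥ 3} q[i-2]_q tⁱ / i!`. Differentiating
`eᵗ Mˢ⁺¹` gives `F(n+1, s+1) = F(n, s+1) + ∑ₖ C(n, k) q[k-1]_q F(n-k, s)`. Families of `s`
disjoint blocks with exponents `1 ≤ e ≤ |B| - 2` inside an `n`-set satisfy the same recurrence,
by looking at the block containing a fixed element `a`: either there is none, or it consists of
`a` and `k` of the other `n` elements and carries one of the exponents counted by `q[k-1]_q`.
A partition as in the statement is such a family on the complement of the maximum, completed by
the block of the remaining elements, which contains the maximum and has exponent `0`.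
-/

/-- The exponential series `e^t`. -/
noncomputable def Eexp : PowerSeries (Polynomial ℚ) :=
  PowerSeries.mk fun n => Polynomial.C ((n.factorial : ℚ)⁻¹)

/-- `M = ∑_{i ≥ 3} q·[i-2]_q · t^i/i!`, so that
`e^t ∏_{i≥3} e^{z q [i-2]_q t^i/i!} = e^t · e^{zM}`. -/
noncomputable def Mser : PowerSeries (Polynomial ℚ) :=
  PowerSeries.mk fun i =>
    if 3 ≤ i then ((i.factorial : ℚ)⁻¹) • ∑ e ∈ Finset.Icc 1 (i - 2), Polynomial.X ^ e
    else 0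

open Finset

section ExponentialGeneratingFunction

open PowerSeries
open scoped Nat

variable {A : Type*} [CommRing A] [Algebra ℚ A]

noncomputable def egfCoeff (M : A⟦X⟧) (n s : ℕ) : A :=
  ((n ! : ℚ) / s !) • coeff n (exp A * M ^ s)

theorem egfCoeff_zero_right (M : A⟦X⟧) (n : ℕ) : egfCoeff M n 0 = 1 := by
  rw [egfCoeff, pow_zero, mul_one, coeff_exp, Algebra.smul_def, ← map_mul]
  simp [Nat.factorial_ne_zero]

theorem egfCoeff_zero_succ {M : A⟦X⟧} (hM : constantCoeff M = 0) (s : ℕ) :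
    egfCoeff M 0 (s + 1) = 0 := by
  simp [egfCoeff, hM]

theorem derivative_exp_mul_pow_succ (M : A⟦X⟧) (s : ℕ) :
    d⁄dX A (exp A * M ^ (s + 1)) =
      exp A * M ^ (s + 1) + (s + 1) • (d⁄dX A M * (exp A * M ^ s)) := by
  rw [Derivation.leibniz, Derivation.leibniz_pow, derivative_exp]
  simp only [smul_eq_mul, nsmul_eq_mul, Nat.add_sub_cancel]
  push_cast
  ring

theorem egfCoeff_succ_succ (M : A⟦X⟧) (n s : ℕ) :
    egfCoeff M (n + 1) (s + 1) = egfCoeff M n (s + 1) +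
      ∑ k ∈ range (n + 1),
        n.choose k • ((((k + 1)! : ℚ) • coeff (k + 1) M) * egfCoeff M (n - k) s) := by
  have h : ((n + 1 : ℕ) : ℚ) • coeff (n + 1) (exp A * M ^ (s + 1)) =
      coeff n (exp A * M ^ (s + 1)) + ((s + 1 : ℕ) : ℚ) • ∑ k ∈ range (n + 1),
        ((k + 1 : ℕ) : ℚ) • (coeff (k + 1) M * coeff (n - k) (exp A * M ^ s)) := by
    have h := congrArg (coeff n) (derivative_exp_mul_pow_succ M s)
    rw [coeff_derivative, map_add, map_nsmul, coeff_mul _ (d⁄dX A M),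
      Nat.sum_antidiagonal_eq_sum_range_succ_mk] at h
    simp only [coeff_derivative, Nat.cast_smul_eq_nsmul, nsmul_eq_mul] at h ⊢
    push_cast
    rw [mul_comm, h, Nat.cast_succ]
    congr 2
    exact sum_congr rfl fun k _ => by ring
  have hn : ((n + 1)! : ℚ) / (s + 1)! = (n ! / (s + 1)! : ℚ) * ((n + 1 : ℕ) : ℚ) := by
    push_cast [Nat.factorial_succ]; ring
  rw [egfCoeff, hn, ← smul_smul, h, smul_add, smul_smul, Finset.smul_sum]
  congr 1
  refine sum_congr rfl fun k hk => ?_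
  rw [egfCoeff, smul_mul_smul_comm, ← Nat.cast_smul_eq_nsmul ℚ, smul_smul, smul_smul]
  congr 1
  have hk : k ≤ n := Nat.lt_succ_iff.mp (mem_range.mp hk)
  have hc := Nat.choose_mul_factorial_mul_factorial hk
  rw [← hc]
  push_cast [Nat.factorial_succ]
  field_simp

end ExponentialGeneratingFunction

section BlockWeights

open PowerSeries
open scoped Nat

-- `q[k-2]_q`; truncated subtraction makes it `0` for `k ≤ 2`, like the coefficients of `Mser`.
noncomputable def blockWeight (k : ℕ) : Polynomial ℚ :=
  ∑ e ∈ Icc 1 (k - 2), Polynomial.X ^ e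

theorem Eexp_eq_exp : Eexp = exp (Polynomial ℚ) := by
  ext n : 1
  simp [Eexp, Polynomial.C_eq_algebraMap]

theorem constantCoeff_Mser : constantCoeff Mser = 0 := by
  simp [Mser, ← coeff_zero_eq_constantCoeff_apply]

theorem factorial_smul_coeff_Mser (k : ℕ) : (k ! : ℚ) • coeff k Mser = blockWeight k := by
  rw [Mser, coeff_mk, blockWeight]
  split_ifs with hk
  · rw [smul_smul, mul_inv_cancel₀ (by exact_mod_cast k.factorial_ne_zero), one_smul]
  · rw [smul_zero, Nat.sub_eq_zero_of_le (by omega)]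
    simp

theorem sum_exponents_eq_blockWeight {N k : ℕ} (hk : k ≤ N + 1) :
    ∑ e ∈ univ.filter (fun e : Fin N => 1 ≤ (e : ℕ) ∧ (e : ℕ) ≤ k - 2), Polynomial.X ^ (e : ℕ) =
      blockWeight k := by
  have hIcc : Icc 1 (k - 2) =
      (univ.filter (fun e : Fin N => 1 ≤ (e : ℕ) ∧ (e : ℕ) ≤ k - 2)).map Fin.valEmbedding := by
    ext e
    simp only [mem_map, mem_filter, mem_univ, true_and, Fin.valEmbedding_apply, mem_Icc]
    exact ⟨fun he => ⟨⟨e, by omega⟩, he, rfl⟩, by rintro ⟨e, he, rfl⟩; exact he⟩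
  rw [blockWeight, hIcc, sum_map]
  rfl

end BlockWeights

theorem sum_powerset_filter_mem_apply_card {α M : Type*} [DecidableEq α] [AddCommMonoid M]
    {G : Finset α} {a : α} (ha : a ∈ G) (f : ℕ → M) :
    ∑ A ∈ G.powerset.filter (a ∈ ·), f #A = ∑ k ∈ range #G, (#G - 1).choose k • f (k + 1) := by
  have hG : #G = #(G.erase a) + 1 := (card_erase_add_one ha).symm
  rw [hG, Nat.add_sub_cancel, ← sum_powerset_apply_card (fun k => f (k + 1))]
  refine sum_nbij' (fun A => A.erase a) (insert a) ?_ ?_ ?_ ?_ ?_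
  · intro A hA
    simp only [mem_filter, mem_powerset] at hA ⊢
    exact erase_subset_erase a hA.1
  · intro B hB
    simp only [mem_filter, mem_powerset] at hB ⊢
    exact ⟨insert_subset ha (hB.trans (erase_subset a G)), mem_insert_self a B⟩
  · intro A hA
    exact insert_erase (mem_filter.mp hA).2
  · intro B hB
    exact erase_insert fun haB => by simpa using mem_powerset.mp hB haB
  · intro A hA
    have haA := (mem_filter.mp hA).2
    rw [card_erase_of_mem haA, Nat.sub_add_cancel (card_pos.mpr ⟨a, haA⟩)]

section ExpFamilies

variable {α : Type*} {N : ℕ}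

def IsExpBlock (G : Finset α) (p : Finset α × Fin N) : Prop :=
  p.1 ⊆ G ∧ 1 ≤ (p.2 : ℕ) ∧ (p.2 : ℕ) ≤ #p.1 - 2

def IsExpFamily (G : Finset α) (s : ℕ) (S : Finset (Finset α × Fin N)) : Prop :=
  (∀ p ∈ S, IsExpBlock G p) ∧ (∀ p ∈ S, ∀ q ∈ S, p ≠ q → Disjoint p.1 q.1) ∧ #S = s

theorem IsExpBlock.nonempty {G : Finset α} {p : Finset α × Fin N} (hp : IsExpBlock G p) :
    p.1.Nonempty :=
  card_pos.mp (by have := hp.2; omega)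

variable [DecidableEq α]

instance (G : Finset α) : DecidablePred (IsExpBlock (N := N) G) :=
  fun _ => by unfold IsExpBlock; infer_instance

instance (G : Finset α) (s : ℕ) : DecidablePred (IsExpFamily (N := N) G s) :=
  fun _ => by unfold IsExpFamily; infer_instance

theorem IsExpFamily.notMem_of_sdiff {G : Finset α} {s : ℕ} {S : Finset (Finset α × Fin N)}
    {p : Finset α × Fin N} (hS : IsExpFamily (G \ p.1) s S) (hp : p.1.Nonempty) : p ∉ S :=
  fun hpS =>
  have ⟨_, hx⟩ := hp
  (mem_sdiff.mp ((hS.1 p hpS).1 hx)).2 hx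

theorem isExpFamily_erase_iff {G : Finset α} {s : ℕ} {S : Finset (Finset α × Fin N)} {a : α} :
    IsExpFamily (G.erase a) s S ↔ IsExpFamily G s S ∧ ∀ p ∈ S, a ∉ p.1 := by
  simp only [IsExpFamily, IsExpBlock, subset_erase]
  grind

theorem IsExpFamily.sdiff_erase {G : Finset α} {s : ℕ} {S : Finset (Finset α × Fin N)}
    {p : Finset α × Fin N} (hS : IsExpFamily G (s + 1) S) (hp : p ∈ S) :
    IsExpFamily (G \ p.1) s (S.erase p) := by
  obtain ⟨hblocks, hdisj, hcard⟩ := hS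
  refine ⟨fun q hq => ?_, fun q hq r hr => hdisj q (mem_of_mem_erase hq) r (mem_of_mem_erase hr),
    by rw [card_erase_of_mem hp, hcard, Nat.add_sub_cancel]⟩
  obtain ⟨hqp, hqS⟩ := mem_erase.mp hq
  exact ⟨subset_sdiff.mpr ⟨(hblocks q hqS).1, hdisj q hqS p hp hqp⟩, (hblocks q hqS).2⟩

theorem IsExpFamily.insert_of_sdiff {G : Finset α} {s : ℕ} {S : Finset (Finset α × Fin N)}
    {p : Finset α × Fin N} (hS : IsExpFamily (G \ p.1) s S) (hp : IsExpBlock G p) :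
    IsExpFamily G (s + 1) (insert p S) := by
  have hpS := hS.notMem_of_sdiff hp.nonempty
  obtain ⟨hblocks, hdisj, hcard⟩ := hS
  have hdisj_p (q) (hq : q ∈ S) : Disjoint p.1 q.1 :=
    disjoint_of_subset_right (hblocks q hq).1 disjoint_sdiff
  refine ⟨?_, ?_, by rw [card_insert_of_notMem hpS, hcard]⟩
  · intro q hq
    rcases mem_insert.mp hq with rfl | hq
    · exact hp
    · exact ⟨(hblocks q hq).1.trans sdiff_subset, (hblocks q hq).2⟩
  · intro q hq r hr hqr
    rcases mem_insert.mp hq with rfl | hqS <;> rcases mem_insert.mp hr with rfl | hrS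
    · exact absurd rfl hqr
    · exact hdisj_p r hrS
    · exact (hdisj_p q hqS).symm
    · exact hdisj q hqS r hrS hqr

theorem IsExpFamily.card_filter_mem_le_one {G : Finset α} {s : ℕ}
    {S : Finset (Finset α × Fin N)} (hS : IsExpFamily G s S) (a : α) :
    #(S.filter (a ∈ ·.1)) ≤ 1 :=
  card_le_one.mpr fun p hp q hq => by_contra fun hpq =>
    disjoint_left.mp (hS.2.1 p (mem_filter.mp hp).1 q (mem_filter.mp hq).1 hpq)
      (mem_filter.mp hp).2 (mem_filter.mp hq).2

variable [Fintype α]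

variable (N) in
def expFamilies (G : Finset α) (s : ℕ) : Finset (Finset (Finset α × Fin N)) :=
  univ.filter (IsExpFamily G s)

variable (N) in
noncomputable def expFamilyPoly (G : Finset α) (s : ℕ) : Polynomial ℚ :=
  ∑ S ∈ expFamilies N G s, Polynomial.X ^ ∑ p ∈ S, (p.2 : ℕ)

theorem mem_expFamilies {G : Finset α} {s : ℕ} {S : Finset (Finset α × Fin N)} :
    S ∈ expFamilies N G s ↔ IsExpFamily G s S := by
  simp [expFamilies]

theorem expFamilies_zero (G : Finset α) : expFamilies N G 0 = {∅} := by
  ext S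
  simp only [mem_expFamilies, IsExpFamily, Finset.card_eq_zero, mem_singleton]
  constructor
  · exact fun h => h.2.2
  · rintro rfl
    simp

theorem expFamilies_empty_succ (s : ℕ) : expFamilies N (∅ : Finset α) (s + 1) = ∅ := by
  ext S
  simp only [mem_expFamilies, notMem_empty, iff_false]
  rintro ⟨hblocks, -, hcard⟩
  obtain ⟨p, hp⟩ := card_pos.mp (by rw [hcard]; omega)
  obtain ⟨x, hx⟩ := (hblocks p hp).nonempty
  exact notMem_empty x ((hblocks p hp).1 hx)

section Sums

variable {M : Type*} [AddCommMonoid M]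

theorem sum_expFamilies_eq_erase_add (G : Finset α) (s : ℕ) (a : α)
    (f : Finset (Finset α × Fin N) → M) :
    ∑ S ∈ expFamilies N G s, f S = ∑ S ∈ expFamilies N (G.erase a) s, f S +
      ∑ S ∈ expFamilies N G s, ∑ _p ∈ S.filter (a ∈ ·.1), f S := by
  rw [← sum_filter_add_sum_filter_not _ (fun S => ∀ p ∈ S, a ∉ p.1)]
  congr 1
  · refine sum_congr ?_ fun _ _ => rfl
    ext S
    simp only [mem_filter, mem_expFamilies, isExpFamily_erase_iff]
  · rw [← sum_filter_of_ne (p := fun S => ¬∀ p ∈ S, a ∉ p.1) (s := expFamilies N G s)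
      (f := fun S => ∑ _p ∈ S.filter (a ∈ ·.1), f S)]
    · refine sum_congr rfl fun S hS => ?_
      obtain ⟨hS, ha⟩ := mem_filter.mp hS
      push Not at ha
      obtain ⟨p, hpS, hap⟩ := ha
      have hone : #(S.filter (a ∈ ·.1)) = 1 :=
        le_antisymm ((mem_expFamilies.mp hS).card_filter_mem_le_one a)
          (card_pos.mpr ⟨p, mem_filter.mpr ⟨hpS, hap⟩⟩)
      rw [sum_const, hone, one_smul]
    · intro S _ hne ha
      obtain ⟨p, hp, -⟩ := exists_ne_zero_of_sum_ne_zero hne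
      exact ha p (mem_filter.mp hp).1 (mem_filter.mp hp).2

theorem sum_expFamilies_filter_mem {G : Finset α} {s : ℕ} {p : Finset α × Fin N}
    (hp : IsExpBlock G p) (f : Finset (Finset α × Fin N) → M) :
    ∑ S ∈ (expFamilies N G (s + 1)).filter (p ∈ ·), f S =
      ∑ S ∈ expFamilies N (G \ p.1) s, f (insert p S) := by
  symm
  refine sum_nbij' (insert p) (fun S => S.erase p) ?_ ?_ ?_ ?_ fun _ _ => rfl
  · intro S hS
    simp only [mem_filter, mem_expFamilies] at hS ⊢
    exact ⟨hS.insert_of_sdiff hp, mem_insert_self p S⟩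
  · intro S hS
    simp only [mem_filter, mem_expFamilies] at hS ⊢
    exact hS.1.sdiff_erase hS.2
  · intro S hS
    exact erase_insert ((mem_expFamilies.mp hS).notMem_of_sdiff hp.nonempty)
  · intro S hS
    exact insert_erase (mem_filter.mp hS).2

end Sums

theorem expFamilyPoly_succ (G : Finset α) (s : ℕ) (a : α) :
    expFamilyPoly N G (s + 1) = expFamilyPoly N (G.erase a) (s + 1) +
      ∑ p ∈ univ.filter (fun p : Finset α × Fin N => IsExpBlock G p ∧ a ∈ p.1),
        Polynomial.X ^ (p.2 : ℕ) * expFamilyPoly N (G \ p.1) s := by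
  rw [expFamilyPoly, sum_expFamilies_eq_erase_add G (s + 1) a,
    sum_comm' (t' := univ.filter (fun p => IsExpBlock G p ∧ a ∈ p.1))
      (s' := fun p => (expFamilies N G (s + 1)).filter (p ∈ ·))]
  · congr 1
    refine sum_congr rfl fun p hp => ?_
    rw [sum_expFamilies_filter_mem (mem_filter.mp hp).2.1, expFamilyPoly, mul_sum]
    refine sum_congr rfl fun S hS => ?_
    rw [sum_insert ((mem_expFamilies.mp hS).notMem_of_sdiff (mem_filter.mp hp).2.1.nonempty),
      pow_add]
  · intro S p
    simp only [mem_filter, mem_univ, true_and, mem_expFamilies]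
    constructor
    · rintro ⟨hS, hpS, hap⟩
      exact ⟨⟨hS, hpS⟩, hS.1 p hpS, hap⟩
    · rintro ⟨⟨hS, hpS⟩, -, hap⟩
      exact ⟨hS, hpS, hap⟩

end ExpFamilies

section Counting

variable {α : Type*} [Fintype α] [DecidableEq α] {N : ℕ}

theorem sum_expBlocks_mem (G : Finset α) (a : α) (hG : #G ≤ N + 1) (f : ℕ → Polynomial ℚ) :
    ∑ p ∈ univ.filter (fun p : Finset α × Fin N => IsExpBlock G p ∧ a ∈ p.1),
        Polynomial.X ^ (p.2 : ℕ) * f #p.1 =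
      ∑ A ∈ G.powerset.filter (a ∈ ·), blockWeight #A * f #A := by
  rw [← sum_fiberwise_of_maps_to (g := Prod.fst) (t := G.powerset.filter (a ∈ ·))]
  · refine sum_congr rfl fun A hA => ?_
    obtain ⟨hAG, haA⟩ := mem_filter.mp hA
    rw [← sum_exponents_eq_blockWeight ((card_le_card (mem_powerset.mp hAG)).trans hG), sum_mul]
    refine sum_nbij' Prod.snd (fun e => (A, e)) ?_ ?_ ?_ ?_ ?_
    · intro p hp
      obtain ⟨hpBlock, rfl⟩ := mem_filter.mp hp
      obtain ⟨-, ⟨-, he⟩, -⟩ := mem_filter.mp hpBlock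
      exact mem_filter.mpr ⟨mem_univ _, he⟩
    · intro e he
      exact mem_filter.mpr ⟨mem_filter.mpr ⟨mem_univ _, ⟨mem_powerset.mp hAG,
        (mem_filter.mp he).2⟩, haA⟩, rfl⟩
    · intro p hp
      exact Prod.ext (mem_filter.mp hp).2.symm rfl
    · intro e _
      rfl
    · intro p hp
      rw [(mem_filter.mp hp).2]
  · intro p hp
    obtain ⟨-, ⟨hpG, -⟩, hap⟩ := mem_filter.mp hp
    exact mem_filter.mpr ⟨mem_powerset.mpr hpG, hap⟩

theorem expFamilyPoly_eq_egfCoeff (G : Finset α) (hG : #G ≤ N + 1) (s : ℕ) :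
    expFamilyPoly N G s = egfCoeff Mser #G s := by
  induction G using Finset.strongInduction generalizing s with
  | H G ih =>
  cases s with
  | zero =>
    rw [expFamilyPoly, expFamilies_zero, sum_singleton, sum_empty, pow_zero, egfCoeff_zero_right]
  | succ s =>
  rcases G.eq_empty_or_nonempty with rfl | ⟨a, ha⟩
  · rw [expFamilyPoly, expFamilies_empty_succ, sum_empty, card_empty,
      egfCoeff_zero_succ constantCoeff_Mser]
  obtain ⟨n, hn⟩ : ∃ n, #G = n + 1 := ⟨#(G.erase a), (card_erase_add_one ha).symm⟩
  have hblocks : ∀ p ∈ univ.filter (fun p : Finset α × Fin N => IsExpBlock G p ∧ a ∈ p.1),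
      Polynomial.X ^ (p.2 : ℕ) * expFamilyPoly N (G \ p.1) s =
        Polynomial.X ^ (p.2 : ℕ) * egfCoeff Mser (#G - #p.1) s := by
    intro p hp
    obtain ⟨hp, hap⟩ := (mem_filter.mp hp).2
    rw [ih _ (sdiff_ssubset hp.1 ⟨a, hap⟩) ((card_le_card sdiff_subset).trans hG),
      card_sdiff_of_subset hp.1]
  rw [expFamilyPoly_succ G s a, sum_congr rfl hblocks,
    ih _ (erase_ssubset ha) ((card_le_card (erase_subset a G)).trans hG),
    sum_expBlocks_mem G a hG (fun k => egfCoeff Mser (#G - k) s),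
    sum_powerset_filter_mem_apply_card ha (fun k => blockWeight k * egfCoeff Mser (#G - k) s),
    card_erase_of_mem ha, hn, egfCoeff_succ_succ,
    Nat.add_sub_cancel]
  refine congrArg _ (sum_congr rfl fun k _ => ?_)
  rw [factorial_smul_coeff_Mser, Nat.add_sub_add_right]

end Counting

section MarkedPartitions

variable {α : Type*} [DecidableEq α] {N : ℕ} [NeZero N]

def IsMarkedPartition (a : α) (s : ℕ) (c : Finset (Finset α × Fin N)) : Prop :=
  (∀ p ∈ c, p.1.Nonempty) ∧
  (∀ p ∈ c, ∀ p' ∈ c, p ≠ p' → Disjoint p.1 p'.1) ∧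
  (∀ x : α, ∃ p ∈ c, x ∈ p.1) ∧
  (∀ p ∈ c, a ∈ p.1 → p.2 = 0) ∧
  (∀ p ∈ c, a ∉ p.1 → 3 ≤ #p.1 ∧ 1 ≤ (p.2 : ℕ) ∧ (p.2 : ℕ) ≤ #p.1 - 2) ∧
  #(c.filter (fun p => a ∉ p.1)) = s

theorem IsMarkedPartition.eq_of_mem {a : α} {s : ℕ} {c : Finset (Finset α × Fin N)}
    (hc : IsMarkedPartition a s c) {p q : Finset α × Fin N} (hp : p ∈ c) (hq : q ∈ c) {x : α}
    (hxp : x ∈ p.1) (hxq : x ∈ q.1) : p = q :=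
  by_contra fun hpq => disjoint_left.mp (hc.2.1 p hp q hq hpq) hxp hxq

variable [Fintype α]

def restBlock (S : Finset (Finset α × Fin N)) : Finset α × Fin N :=
  (univ \ S.biUnion Prod.fst, 0)

theorem IsExpFamily.mem_restBlock {a : α} {s : ℕ} {S : Finset (Finset α × Fin N)}
    (hS : IsExpFamily (univ.erase a) s S) : a ∈ (restBlock S).1 := by
  simp only [restBlock, mem_sdiff, mem_univ, mem_biUnion, true_and, not_exists, not_and]
  exact fun p hp hap => (mem_erase.mp ((hS.1 p hp).1 hap)).1 rfl

theorem IsExpFamily.filter_insert_restBlock {a : α} {s : ℕ} {S : Finset (Finset α × Fin N)}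
    (hS : IsExpFamily (univ.erase a) s S) :
    (insert (restBlock S) S).filter (fun p => a ∉ p.1) = S := by
  rw [filter_insert, if_neg (not_not_intro hS.mem_restBlock)]
  exact filter_true_of_mem fun p hp hap => (mem_erase.mp ((hS.1 p hp).1 hap)).1 rfl

theorem IsExpFamily.isMarkedPartition_insert_restBlock {a : α} {s : ℕ}
    {S : Finset (Finset α × Fin N)} (hS : IsExpFamily (univ.erase a) s S) :
    IsMarkedPartition a s (insert (restBlock S) S) := by
  have hrest : ∀ p ∈ S, Disjoint (restBlock S).1 p.1 := fun p hp =>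
    sdiff_disjoint.mono_right (subset_biUnion_of_mem Prod.fst hp)
  have hmem {p} (hp : p ∈ insert (restBlock S) S) (hap : a ∈ p.1) : p = restBlock S :=
    (mem_insert.mp hp).resolve_right fun hpS => (mem_erase.mp ((hS.1 p hpS).1 hap)).1 rfl
  refine ⟨?_, ?_, ?_, fun p hp hap => by rw [hmem hp hap]; rfl, ?_, ?_⟩
  · intro p hp
    rcases mem_insert.mp hp with rfl | hpS
    · exact ⟨a, hS.mem_restBlock⟩
    · exact (hS.1 p hpS).nonempty
  · intro p hp q hq hpq
    rcases mem_insert.mp hp with rfl | hpS <;> rcases mem_insert.mp hq with rfl | hqS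
    · exact absurd rfl hpq
    · exact hrest q hqS
    · exact (hrest p hpS).symm
    · exact hS.2.1 p hpS q hqS hpq
  · intro x
    by_cases hx : x ∈ S.biUnion Prod.fst
    · obtain ⟨p, hp, hxp⟩ := mem_biUnion.mp hx
      exact ⟨p, mem_insert_of_mem hp, hxp⟩
    · exact ⟨restBlock S, mem_insert_self _ _, mem_sdiff.mpr ⟨mem_univ x, hx⟩⟩
  · intro p hp hap
    have hpS : p ∈ S := (mem_insert.mp hp).resolve_left fun h => hap (h ▸ hS.mem_restBlock)
    have hblock := hS.1 p hpS
    exact ⟨by have := hblock.2; omega, hblock.2⟩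
  · rw [hS.filter_insert_restBlock, hS.2.2]

theorem IsMarkedPartition.isExpFamily_filter {a : α} {s : ℕ} {c : Finset (Finset α × Fin N)}
    (hc : IsMarkedPartition a s c) :
    IsExpFamily (univ.erase a) s (c.filter (fun p => a ∉ p.1)) := by
  refine ⟨fun p hp => ?_, fun p hp q hq => hc.2.1 p (mem_filter.mp hp).1 q (mem_filter.mp hq).1,
    hc.2.2.2.2.2⟩
  obtain ⟨hpc, hap⟩ := mem_filter.mp hp
  exact ⟨fun x hx => mem_erase.mpr ⟨fun hxa => hap (hxa ▸ hx), mem_univ x⟩,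
    (hc.2.2.2.2.1 p hpc hap).2⟩

theorem IsMarkedPartition.eq_restBlock {a : α} {s : ℕ} {c : Finset (Finset α × Fin N)}
    (hc : IsMarkedPartition a s c) {q : Finset α × Fin N} (hq : q ∈ c) (haq : a ∈ q.1) :
    q = restBlock (c.filter (fun p => a ∉ p.1)) := by
  refine Prod.ext (Finset.ext fun x => ?_) (hc.2.2.2.1 q hq haq)
  simp only [restBlock, mem_sdiff, mem_univ, mem_biUnion, mem_filter, true_and, not_exists,
    not_and, and_imp]
  constructor
  · intro hxq p hp hap hxp
    exact hap (hc.eq_of_mem hp hq hxp hxq ▸ haq)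
  · intro hx
    obtain ⟨p, hp, hxp⟩ := hc.2.2.1 x
    by_cases hap : a ∈ p.1
    · exact hc.eq_of_mem hp hq hap haq ▸ hxp
    · exact absurd hxp (hx p hp hap)

theorem IsMarkedPartition.insert_restBlock_filter {a : α} {s : ℕ}
    {c : Finset (Finset α × Fin N)} (hc : IsMarkedPartition a s c) :
    insert (restBlock (c.filter (fun p => a ∉ p.1))) (c.filter (fun p => a ∉ p.1)) = c := by
  obtain ⟨q, hq, haq⟩ := hc.2.2.1 a
  ext p
  rw [mem_insert, mem_filter, ← hc.eq_restBlock hq haq]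
  by_cases hap : a ∈ p.1
  · exact ⟨by rintro (rfl | ⟨-, h⟩); exacts [hq, absurd hap h],
      fun hp => Or.inl (hc.eq_of_mem hp hq hap haq)⟩
  · exact ⟨by rintro (rfl | ⟨hp, -⟩); exacts [absurd haq hap, hp], fun hp => Or.inr ⟨hp, hap⟩⟩

open Classical in
theorem sum_markedPartitions_eq_expFamilyPoly (a : α) (s : ℕ) :
    ∑ c ∈ univ.filter (IsMarkedPartition (N := N) a s), Polynomial.X ^ ∑ p ∈ c, (p.2 : ℕ) =
      expFamilyPoly N (univ.erase a) s := by
  refine sum_nbij' (fun c => c.filter (fun p => a ∉ p.1)) (fun S => insert (restBlock S) S)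
    ?_ ?_ ?_ ?_ ?_
  · intro c hc
    exact mem_expFamilies.mpr (mem_filter.mp hc).2.isExpFamily_filter
  · intro S hS
    exact mem_filter.mpr ⟨mem_univ _, (mem_expFamilies.mp hS).isMarkedPartition_insert_restBlock⟩
  · intro c hc
    exact (mem_filter.mp hc).2.insert_restBlock_filter
  · intro S hS
    exact (mem_expFamilies.mp hS).filter_insert_restBlock
  · intro c hc
    congr 1
    refine (sum_filter_of_ne fun p hp hp2 => ?_).symm
    exact fun hap => hp2 (by rw [(mem_filter.mp hc).2.2.2.2.1 p hp hap, Fin.val_zero])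

end MarkedPartitions

open Classical in
/-- the coefficient of `z^s t^m/m!` in `e^t ∏_{i≥3} e^{zq[i-2]_q t^i/i!}`
equals `∑ q^{e_1+⋯+e_s}`, summed over all partitions with exponents: set partitions
(here of `{1,...,m+1}`, the block with exponent 0 absorbing the maximum element so that
parts of size `i ≥ 2` with exponent 0 contribute `t^{i-1}/(i-1)!`) in which exactly `s`
blocks have size ≥ 3 and carry an exponent `e` with `1 ≤ e ≤ size - 2`, and exactly one
block — the one containing the maximum — carries exponent 0. -/
theorem stmt_15 (s m : ℕ) :
    (m.factorial : Polynomial ℚ) *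
      PowerSeries.coeff (R := Polynomial ℚ) m ((s.factorial : ℚ)⁻¹ • (Eexp * Mser ^ s)) =
    ∑ c ∈ Finset.univ.filter
      (fun c : Finset (Finset (Fin (m + 1)) × Fin (m + 1)) =>
        (∀ p ∈ c, p.1.Nonempty) ∧
        (∀ p ∈ c, ∀ p' ∈ c, p ≠ p' → Disjoint p.1 p'.1) ∧
        (∀ x : Fin (m + 1), ∃ p ∈ c, x ∈ p.1) ∧
        (∀ p ∈ c, Fin.last m ∈ p.1 → p.2 = 0) ∧
        (∀ p ∈ c, Fin.last m ∉ p.1 →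
          3 ≤ p.1.card ∧ 1 ≤ (p.2 : ℕ) ∧ (p.2 : ℕ) ≤ p.1.card - 2) ∧
        (c.filter (fun p => Fin.last m ∉ p.1)).card = s),
      Polynomial.X ^ (∑ p ∈ c, (p.2 : ℕ)) := by
  have hm : #(univ.erase (Fin.last m)) = m := by
    rw [card_erase_of_mem (mem_univ _), card_fin, Nat.add_sub_cancel]
  calc (m.factorial : Polynomial ℚ) *
        PowerSeries.coeff (R := Polynomial ℚ) m ((s.factorial : ℚ)⁻¹ • (Eexp * Mser ^ s))
      = egfCoeff Mser m s := by
        rw [egfCoeff, Eexp_eq_exp, div_eq_mul_inv, mul_comm, mul_smul,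
          LinearMap.map_smul_of_tower, Nat.cast_smul_eq_nsmul, nsmul_eq_mul, mul_comm]
    _ = expFamilyPoly (m + 1) (univ.erase (Fin.last m)) s := by
        rw [expFamilyPoly_eq_egfCoeff _ (by rw [hm]; omega), hm]
    _ = _ := by
        rw [← sum_markedPartitions_eq_expFamilyPoly (Fin.last m) s]
        congr 1
        ext c
        simp only [mem_filter, IsMarkedPartition]
end

section
/- The coefficient of w^s (2t)^n in the series w\widetilde{\Gamma}_{G(2,1)}(t,w), for the first values, is: n=1: s=1 coefficient 1; n=2: coefficients (1,1) for s=(1,2); n=3: (1,3,2) for s=(1,2,3); n=4: (1,6,10,5) for s=(1,2,3,4); and the coefficient of w^s(2t)^n in w\widetilde{\Gamma} counts plane rooted trees with one strong root covering a weak forest on n ordered leaves plus the leaf 0, with s total internal vertices. -/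
/- The `z^s`-coefficient of `γ̃` is `2^{s+1} w^s t^{2s} / (s! (1-2t)^{s+2})`, and `(1-2t)^{-(k+1)}` has
`t^r`-coefficient `2^r C(k+r, k)`. Hence the coefficient of `w^{s+1} (2t)^n` in `w Γ̃` is
`(n+s-1)! C(n, s+1) / (n! s!) = C(n+s-1, s) C(n, s+1) / n`, which for `n ≤ 4` gives the stated rows. -/

/-- The geometric series `1/(1-2t)` (in the variable `t`, coefficients in `ℚ[w]`). -/
noncomputable def A2 : PowerSeries (Polynomial ℚ) :=
  PowerSeries.mk fun n => (2 : Polynomial ℚ) ^ n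

/-- The variable `w`, as a constant power series. -/
noncomputable def Wc : PowerSeries (Polynomial ℚ) :=
  PowerSeries.C Polynomial.X

/-- The coefficient of `z^s` in
`γ̃_{G(2,1)}(t,z,w) = 2(∑_{i≥1} i(2t)^{i-1}) ∏_{j≥2} e^{(wz/2)(2t)^j}
                   = 2(1-2t)^{-2} e^{wz·(2t)²/(1-2t)·(1/2)·2}`,
namely `2(1-2t)^{-2} (2w t² /(1-2t))^s / s!`. -/
noncomputable def gamTilde (s : ℕ) : PowerSeries (Polynomial ℚ) :=
  2 * A2 ^ 2 * ((s.factorial : ℚ)⁻¹ • (2 * Wc * (PowerSeries.X ^ 2 * A2)) ^ s)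

/-- The coefficient of `t^n` in `Γ̃_{G(2,1)}(t,w)`, obtained from `γ̃` by substituting
`z = ∂/∂t` monomial-by-monomial (a monomial `z^s t^{m}` becomes `(m!/(m-s)!) t^{m-s}`)
and then formally integrating with constant 0 (so `t^{n}` receives
`(n+s-1)!/n!` times the coefficient of `z^s t^{n+s-1}`). -/
noncomputable def GammaTildeCoeff (n : ℕ) : Polynomial ℚ :=
  ∑ s ∈ Finset.range n,
    (((n + s - 1).factorial : ℚ) / (n.factorial : ℚ)) •
      PowerSeries.coeff (n + s - 1) (gamTilde s)

section

open PowerSeries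

lemma A2_eq_rescale : A2 = rescale 2 (mk 1) := by
  rw [rescale_mk]
  simp [A2]

lemma coeff_A2_pow (k r : ℕ) :
    coeff r (A2 ^ (k + 1)) = 2 ^ r * ((k + r).choose k : Polynomial ℚ) := by
  rw [A2_eq_rescale, ← map_pow, mk_one_pow_eq_mk_choose_add, coeff_rescale, coeff_mk]

lemma gamTilde_eq (s : ℕ) :
    gamTilde s = (s.factorial : ℚ)⁻¹ •
      (C (2 ^ (s + 1) * Polynomial.X ^ s) * (X ^ (2 * s) * A2 ^ (s + 2))) := by
  rw [gamTilde, Wc, mul_smul_comm]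
  congr 1
  simp only [map_mul, map_pow, map_ofNat]
  ring

lemma coeff_gamTilde (s r : ℕ) :
    coeff (2 * s + r) (gamTilde s) =
      (2 ^ (s + 1 + r) / s.factorial * (s + 1 + r).choose (s + 1) : ℚ) • Polynomial.X ^ s := by
  rw [gamTilde_eq, map_rat_smul, coeff_C_mul, add_comm (2 * s), coeff_X_pow_mul, coeff_A2_pow,
    Polynomial.smul_eq_C_mul, Polynomial.smul_eq_C_mul]
  simp only [div_eq_mul_inv, Polynomial.C_mul, Polynomial.C_pow, map_natCast, map_ofNat]
  ring

lemma GammaTildeCoeff_eq (n : ℕ) :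
    GammaTildeCoeff n = ∑ s ∈ Finset.range n,
      (2 ^ n * (n + s - 1).factorial / (n.factorial * s.factorial) * n.choose (s + 1) : ℚ) •
        Polynomial.X ^ s := by
  refine Finset.sum_congr rfl fun s hs => ?_
  obtain ⟨r, rfl⟩ : ∃ r, n = s + 1 + r := ⟨n - (s + 1), by grind⟩
  rw [show s + 1 + r + s - 1 = 2 * s + r by omega, coeff_gamTilde, smul_smul]
  congr 1
  field_simp

end

open Polynomial in
/-- the first coefficients of `w·Γ̃_{G(2,1)}(t,w)`: the coefficient of
`(2t)^n` is `w` for n = 1, `w² + w` for n = 2, `2w³ + 3w² + w` for n = 3 and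
`5w⁴ + 10w³ + 6w² + w` for n = 4, i.e.
`w Γ̃ = 2wt + (w²+w)4t² + (2w³+3w²+w)8t³ + (5w⁴+10w³+6w²+w)16t⁴ + ⋯`. -/
theorem stmt_17 :
    X * GammaTildeCoeff 1 = 2 * X ∧
    X * GammaTildeCoeff 2 = 4 * (X ^ 2 + X) ∧
    X * GammaTildeCoeff 3 = 8 * (2 * X ^ 3 + 3 * X ^ 2 + X) ∧
    X * GammaTildeCoeff 4 = 16 * (5 * X ^ 4 + 10 * X ^ 3 + 6 * X ^ 2 + X) := by
  simp only [GammaTildeCoeff_eq, Finset.sum_range_succ, Finset.sum_range_zero]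
  norm_num [Nat.factorial, Nat.choose]
  refine ⟨?_, ?_, ?_, ?_⟩ <;> simp only [Polynomial.smul_eq_C_mul, map_ofNat] <;> ring
end
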